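/- arXiv:2509.13929 — 4 statements merged into one kernel-verified Lean document; each statement's English description precedes it below -/
import Mathlib

section
/- Let P be the submonoid of (ℕ², +) generated by (1,0), (1,1) and (1,2). Then (1,0) and (1,1) have a common upper bound in P with respect to the left-invariant order (p ≤ r iff p + q = r for some q ∈ P), but no least common upper bound; in particular, (2,1) and (2,2) are distinct minimal common upper bounds of (1,0) and (1,1) in P. -/
lemma memP (p : ℕ × ℕ) :
    p ∈ AddSubmonoid.closure {((1, 0) : ℕ × ℕ), (1, 1), (1, 2)} ↔ p.2 ≤ 2 * p.1 := by
  constructor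
  · intro hp
    induction hp using AddSubmonoid.closure_induction with
    | mem x hx => rcases hx with h | h | h <;> subst h <;> simp
    | zero => simp
    | add x y _ _ hx hy => simp only [Prod.fst_add, Prod.snd_add]; omega
  · intro h
    have he : p = (p.1 - (p.2 + 1) / 2) • ((1, 0) : ℕ × ℕ)
        + (p.2 % 2) • ((1, 1) : ℕ × ℕ) + (p.2 / 2) • ((1, 2) : ℕ × ℕ) := by
      ext <;> simp [Prod.smul_fst, Prod.smul_snd, smul_eq_mul] <;> omega
    rw [he]
    have h1 : ((1, 0) : ℕ × ℕ) ∈ AddSubmonoid.closure {((1, 0) : ℕ × ℕ), (1, 1), (1, 2)} :=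
      AddSubmonoid.subset_closure (by simp)
    have h2 : ((1, 1) : ℕ × ℕ) ∈ AddSubmonoid.closure {((1, 0) : ℕ × ℕ), (1, 1), (1, 2)} :=
      AddSubmonoid.subset_closure (by simp)
    have h3 : ((1, 2) : ℕ × ℕ) ∈ AddSubmonoid.closure {((1, 0) : ℕ × ℕ), (1, 1), (1, 2)} :=
      AddSubmonoid.subset_closure (by simp)
    exact AddSubmonoid.add_mem _ (AddSubmonoid.add_mem _ (AddSubmonoid.nsmul_mem _ h1 _)
      (AddSubmonoid.nsmul_mem _ h2 _)) (AddSubmonoid.nsmul_mem _ h3 _)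

lemma leP (p r : ℕ × ℕ) :
    (∃ q ∈ AddSubmonoid.closure {((1, 0) : ℕ × ℕ), (1, 1), (1, 2)}, p + q = r) ↔
      p.1 ≤ r.1 ∧ p.2 ≤ r.2 ∧ r.2 - p.2 ≤ 2 * (r.1 - p.1) := by
  constructor
  · rintro ⟨q, hq, rfl⟩
    rw [memP] at hq
    simp only [Prod.fst_add, Prod.snd_add]
    omega
  · rintro ⟨h1, h2, h3⟩
    refine ⟨(r.1 - p.1, r.2 - p.2), (memP _).2 (by simpa using h3), ?_⟩
    ext <;> simp <;> omega

/-- in the submonoid `P` of `ℕ²` generated by `(1,0)`, `(1,1)`,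
`(1,2)`, the elements `(1,0)` and `(1,1)` have a common upper bound but no
least common upper bound; `(2,1)` and `(2,2)` are distinct minimal common
upper bounds. -/
theorem stmt6 :
    let P : AddSubmonoid (ℕ × ℕ) :=
      AddSubmonoid.closure {((1, 0) : ℕ × ℕ), (1, 1), (1, 2)}
    let le : ℕ × ℕ → ℕ × ℕ → Prop := fun p r => ∃ q ∈ P, p + q = r
    let UB : ℕ × ℕ → Prop := fun u => u ∈ P ∧ le (1, 0) u ∧ le (1, 1) u
    -- a common upper bound exists
    (∃ u, UB u) ∧
    -- but there is no least common upper bound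
    (¬ ∃ u, UB u ∧ ∀ v, UB v → le u v) ∧
    -- in particular, (2,1) and (2,2) are distinct minimal common upper bounds
    ((2, 1) : ℕ × ℕ) ≠ (2, 2) ∧
    (UB (2, 1) ∧ ∀ v, UB v → le v (2, 1) → v = (2, 1)) ∧
    (UB (2, 2) ∧ ∀ v, UB v → le v (2, 2) → v = (2, 2)) := by
  intro P le UB
  have hUB : ∀ u, UB u ↔ 1 ≤ u.2 ∧ u.2 + 2 ≤ 2 * u.1 := by
    intro u
    constructor
    · rintro ⟨hu, h1, h2⟩
      rw [memP] at hu
      obtain ⟨a1, a2, a3⟩ := (leP _ _).1 h1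
      obtain ⟨b1, b2, b3⟩ := (leP _ _).1 h2
      simp only at a1 a2 a3 b1 b2 b3
      omega
    · intro h
      exact ⟨(memP _).2 (by omega), (leP _ _).2 (by simp; omega),
        (leP _ _).2 (by simp; omega)⟩
  have h21 : UB (2, 1) := (hUB _).2 (by omega)
  have h22 : UB (2, 2) := (hUB _).2 (by omega)
  have hmin : ∀ w : ℕ × ℕ, UB w → w.1 = 2 →
      (∀ v, UB v → le v w → v = w) := by
    intro w hw hw1 v hv hle
    rw [hUB] at hw hv
    obtain ⟨c1, c2, c3⟩ := (leP _ _).1 hle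
    ext <;> omega
  refine ⟨⟨(2, 1), h21⟩, ?_, by decide,
    ⟨h21, hmin _ h21 (by norm_num)⟩, ⟨h22, hmin _ h22 (by norm_num)⟩⟩
  rintro ⟨u, hu, hleast⟩
  have e1 := hmin _ h21 (by norm_num) u hu (hleast _ h21)
  have e2 := hmin _ h22 (by norm_num) u hu (hleast _ h22)
  rw [e1] at e2
  exact absurd e2 (by decide)
end

section
/- Let (Q, P) be a weakly quasi-lattice ordered group and m ∈ P. Then Ω_{P,m} := {(p,q) ∈ P × P : p ≤ q ≤ m}, with composition ((p,q),(q,r)) ↦ (p,r) and degree map d(p,q) = p⁻¹q, is a P-graph; in particular, d satisfies the unique factorisation property. -/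
/-- The left-invariant order: `p ≤ r` iff `p * q = r` for some `q ∈ P`. -/
def pgle {Q : Type*} [Group Q] (P : Submonoid Q) (p r : Q) : Prop :=
  ∃ q ∈ P, p * q = r

/-- Weakly quasi-lattice ordered group. -/
def IsWQLO {Q : Type*} [Group Q] (P : Submonoid Q) : Prop :=
  (∀ q ∈ P, q⁻¹ ∈ P → q = 1) ∧
  ∀ a b : Q, a ∈ P → b ∈ P → (∃ c ∈ P, pgle P a c ∧ pgle P b c) →
    ∃ c ∈ P, pgle P a c ∧ pgle P b c ∧
      ∀ u ∈ P, pgle P a u → pgle P b u → pgle P c u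

/-- The finite path prototype `Ω_{P,m} = {(p,q) ∈ P × P : p ≤ q ≤ m}`. -/
def OmegaPm {Q : Type*} [Group Q] (P : Submonoid Q) (m : Q) : Set (Q × Q) :=
  {pq | pq.1 ∈ P ∧ pq.2 ∈ P ∧ pgle P pq.1 pq.2 ∧ pgle P pq.2 m}

/-- `Ω_{P,m}` with composition `(p,q)(q,r) = (p,r)` and degree
`d(p,q) = p⁻¹q` is a `P`-graph; in particular the degree map satisfies the
unique factorisation property. -/
theorem stmt9 {Q : Type*} [Group Q] (P : Submonoid Q) (hW : IsWQLO P)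
    (m : Q) (hm : m ∈ P) :
    -- composition of composable pairs stays in Ω_{P,m}
    (∀ p q r : Q, (p, q) ∈ OmegaPm P m → (q, r) ∈ OmegaPm P m →
      (p, r) ∈ OmegaPm P m) ∧
    -- identities: (p,p) ∈ Ω_{P,m}, with degree 1
    (∀ p q : Q, (p, q) ∈ OmegaPm P m →
      (p, p) ∈ OmegaPm P m ∧ (q, q) ∈ OmegaPm P m ∧ p⁻¹ * p = 1) ∧
    -- degrees lie in P and d is functorial
    (∀ p q : Q, (p, q) ∈ OmegaPm P m → p⁻¹ * q ∈ P) ∧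
    (∀ p q r : Q, (p, q) ∈ OmegaPm P m → (q, r) ∈ OmegaPm P m →
      p⁻¹ * r = (p⁻¹ * q) * (q⁻¹ * r)) ∧
    -- unique factorisation property
    (∀ p r a b : Q, (p, r) ∈ OmegaPm P m → a ∈ P → b ∈ P → p⁻¹ * r = a * b →
      ∃! q : Q, (p, q) ∈ OmegaPm P m ∧ (q, r) ∈ OmegaPm P m ∧
        p⁻¹ * q = a ∧ q⁻¹ * r = b) := by
  have hrefl : ∀ p : Q, pgle P p p := fun p => ⟨1, P.one_mem, mul_one p⟩
  have htrans : ∀ p q r : Q, pgle P p q → pgle P q r → pgle P p r := by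
    rintro p q r ⟨a, ha, rfl⟩ ⟨b, hb, rfl⟩
    exact ⟨a * b, P.mul_mem ha hb, (mul_assoc _ _ _).symm⟩
  refine ⟨?_, ?_, ?_, ?_, ?_⟩
  · rintro p q r ⟨hp, hq, hpq, hqm⟩ ⟨_, hr, hqr, hrm⟩
    exact ⟨hp, hr, htrans _ _ _ hpq hqr, hrm⟩
  · rintro p q ⟨hp, hq, hpq, hqm⟩
    exact ⟨⟨hp, hp, hrefl p, htrans _ _ _ hpq hqm⟩, ⟨hq, hq, hrefl q, hqm⟩,
      inv_mul_cancel p⟩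
  · rintro p q ⟨hp, hq, ⟨a, ha, hpa⟩, hqm⟩
    dsimp only at hpa
    have : p⁻¹ * q = a := by rw [← hpa]; group
    rw [this]; exact ha
  · intro p q r _ _; group
  · rintro p r a b ⟨hp, hr, hpr, hrm⟩ ha hb hab
    dsimp only at hp hr hrm
    have hq : p * a * b = r := by
      have h1 : p * (p⁻¹ * r) = r := by group
      rw [hab] at h1; rw [← h1]; group
    have hpa : p * a ∈ P := P.mul_mem hp ha
    have hpab : pgle P (p * a) m := htrans _ _ _ ⟨b, hb, hq⟩ hrm
    refine ⟨p * a, ⟨⟨hp, hpa, ⟨a, ha, rfl⟩, hpab⟩,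
      ⟨hpa, hr, ⟨b, hb, hq⟩, hrm⟩, by group, by rw [← hq]; group⟩, ?_⟩
    rintro q ⟨_, _, hpq, _⟩
    rw [← hpq]; group
end

section
/- Let Λ be a finitely aligned P-graph. The map h sending each graph morphism x : Ω_{P,(m_n)} → Λ to the set h(x) = {x(e, p) : (e, p) ∈ dom(x)} is an injection from the set of graph morphisms into the set of filters of Λ; in particular, h(x) is always a nonempty, hereditary, directed subset of Λ, and h(x) = h(y) implies x = y. -/
/-- A (discrete) `P`-graph, presented as a one-sorted countable small category
with range `r`, source `s`, a partially defined composition `comp` (meaningful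
when `s μ = r ν`), and a degree functor `d` into `P` satisfying the unique
factorisation property. -/
structure PGraph (Q : Type*) [Group Q] (P : Submonoid Q) where
  carrier : Type*
  countable : Countable carrier
  r : carrier → carrier
  s : carrier → carrier
  comp : carrier → carrier → carrier
  d : carrier → Q
  r_r : ∀ μ, r (r μ) = r μ
  s_r : ∀ μ, s (r μ) = r μ
  r_s : ∀ μ, r (s μ) = s μ
  s_s : ∀ μ, s (s μ) = s μ
  r_comp : ∀ μ ν, s μ = r ν → r (comp μ ν) = r μ
  s_comp : ∀ μ ν, s μ = r ν → s (comp μ ν) = s ν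
  id_comp : ∀ μ, comp (r μ) μ = μ
  comp_id : ∀ μ, comp μ (s μ) = μ
  assoc : ∀ μ ν κ, s μ = r ν → s ν = r κ →
    comp (comp μ ν) κ = comp μ (comp ν κ)
  d_mem : ∀ μ, d μ ∈ P
  d_unit : ∀ μ, d (r μ) = 1
  d_comp : ∀ μ ν, s μ = r ν → d (comp μ ν) = d μ * d ν
  ufp : ∀ lam p q, p ∈ P → q ∈ P → d lam = p * q →
    ∃! μν : carrier × carrier, s μν.1 = r μν.2 ∧ comp μν.1 μν.2 = lam ∧
      d μν.1 = p ∧ d μν.2 = q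

/-- The prefix order on a `P`-graph: `μ ⪯ λ` iff `λ = μν` for some `ν`. -/
def PGraph.le {Q : Type*} [Group Q] {P : Submonoid Q} (G : PGraph Q P)
    (μ lam : G.carrier) : Prop :=
  ∃ ν, G.s μ = G.r ν ∧ G.comp μ ν = lam

/-- A filter of a `P`-graph: a nonempty, hereditary, directed subset. -/
def PGraph.IsFilter {Q : Type*} [Group Q] {P : Submonoid Q} (G : PGraph Q P)
    (x : Set G.carrier) : Prop :=
  x.Nonempty ∧ (∀ lam μ, μ ∈ x → G.le lam μ → lam ∈ x) ∧
    ∀ μ ν, μ ∈ x → ν ∈ x → ∃ lam ∈ x, G.le μ lam ∧ G.le ν lam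

/-- The cone `μΛ` of a morphism `μ`. -/
def PGraph.cone {Q : Type*} [Group Q] {P : Submonoid Q} (G : PGraph Q P)
    (μ : G.carrier) : Set G.carrier :=
  {lam | ∃ ν, G.s μ = G.r ν ∧ G.comp μ ν = lam}

/-- A `P`-graph is finitely aligned if every `μΛ ∩ νΛ` is a finite union of
cones. -/
def PGraph.FinitelyAligned {Q : Type*} [Group Q] {P : Submonoid Q}
    (G : PGraph Q P) : Prop :=
  ∀ μ ν, ∃ J : Set G.carrier, J.Finite ∧
    G.cone μ ∩ G.cone ν = ⋃ lam ∈ J, G.cone lam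

/-- The path prototype `Ω_{P,(m_n)} = ⋃_n Ω_{P,m_n}`, as a set of pairs. -/
def Omega {Q : Type*} [Group Q] (P : Submonoid Q) (mseq : ℕ → Q) :
    Set (Q × Q) :=
  {pq | pq.1 ∈ P ∧ pq.2 ∈ P ∧ pgle P pq.1 pq.2 ∧ ∃ n, pgle P pq.2 (mseq n)}

/-- A `≤`-increasing sequence in `P`. -/
def IncSeq {Q : Type*} [Group Q] (P : Submonoid Q) (m : ℕ → Q) : Prop :=
  (∀ n, m n ∈ P) ∧ ∀ j k, j < k → pgle P (m j) (m k)

/-- A graph morphism `x : Ω_{P,(m_n)} → Λ`, presented as a function `f` on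
`Q × Q` together with its domain `D = Ω_{P,(m_n)}`: `f` is a degree-preserving
functor on `D`. -/
def IsPathMorph {Q : Type*} [Group Q] {P : Submonoid Q} (G : PGraph Q P)
    (D : Set (Q × Q)) (f : Q × Q → G.carrier) : Prop :=
  (∃ mseq : ℕ → Q, IncSeq P mseq ∧ D = Omega P mseq) ∧
  (∀ p q r : Q, (p, q) ∈ D → (q, r) ∈ D →
    G.s (f (p, q)) = G.r (f (q, r)) ∧
    G.comp (f (p, q)) (f (q, r)) = f (p, r)) ∧
  (∀ p : Q, (p, p) ∈ D → G.r (f (p, p)) = f (p, p)) ∧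
  (∀ p q : Q, (p, q) ∈ D → G.d (f (p, q)) = p⁻¹ * q)

/-- The shifted domain of a graph morphism: `dom(x·m) = {(p,q) : (mp,mq) ∈ dom x}`
(with `p, q` ranging over `P`). -/
def shiftD {Q : Type*} [Group Q] (P : Submonoid Q) (m : Q) (D : Set (Q × Q)) :
    Set (Q × Q) :=
  {pq | pq.1 ∈ P ∧ pq.2 ∈ P ∧ (m * pq.1, m * pq.2) ∈ D}

/-- The shifted graph morphism `(x·m)(p,q) = x(mp, mq)`. -/
def shiftF {Q X : Type*} [Group Q] (m : Q) (f : Q × Q → X) : Q × Q → X :=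
  fun pq => f (m * pq.1, m * pq.2)

/-- The set `h(x) = {x(e,p) : (e,p) ∈ dom x}` associated to a graph morphism. -/
def hset {Q : Type*} [Group Q] {P : Submonoid Q} (G : PGraph Q P)
    (D : Set (Q × Q)) (f : Q × Q → G.carrier) : Set G.carrier :=
  {lam | ∃ p : Q, ((1 : Q), p) ∈ D ∧ f (1, p) = lam}

lemma pgle_refl' {Q : Type*} [Group Q] (P : Submonoid Q) (p : Q) : pgle P p p :=
  ⟨1, P.one_mem, mul_one p⟩

lemma pgle_trans' {Q : Type*} [Group Q] {P : Submonoid Q} {a b c : Q}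
    (h1 : pgle P a b) (h2 : pgle P b c) : pgle P a c := by
  obtain ⟨u, hu, rfl⟩ := h1
  obtain ⟨v, hv, rfl⟩ := h2
  exact ⟨u * v, P.mul_mem hu hv, (mul_assoc _ _ _).symm⟩

lemma pgle_one {Q : Type*} [Group Q] {P : Submonoid Q} {p : Q} (hp : p ∈ P) :
    pgle P 1 p := ⟨p, hp, one_mul p⟩

lemma hsub {Q : Type*} [Group Q] {P : Submonoid Q} (G : PGraph Q P)
    {D D' : Set (Q × Q)} {f f' : Q × Q → G.carrier}
    (hx : IsPathMorph G D f) (hy : IsPathMorph G D' f')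
    (hss : hset G D f ⊆ hset G D' f') :
    ∀ p, ((1:Q), p) ∈ D → ((1:Q), p) ∈ D' ∧ f (1, p) = f' (1, p) := by
  intro p hp
  obtain ⟨q, hq, heq⟩ := hss ⟨p, hp, rfl⟩
  have hdq := hy.2.2.2 1 q hq
  have hdp := hx.2.2.2 1 p hp
  simp only [inv_one, one_mul] at hdq hdp
  have : q = p := by rw [← hdq, heq, hdp]
  subst this
  exact ⟨hq, heq.symm⟩

/-- `h(x) = {x(e,p) : (e,p) ∈ dom x}` is always a filter, and
the map `h` is injective on graph morphisms: `h(x) = h(y)` implies that `x`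
and `y` have the same domain and agree on it. -/
theorem stmt18 {Q : Type*} [Group Q] {P : Submonoid Q} (hW : IsWQLO P)
    (G : PGraph Q P) (hfa : G.FinitelyAligned)
    (D : Set (Q × Q)) (f : Q × Q → G.carrier) (hx : IsPathMorph G D f) :
    G.IsFilter (hset G D f) ∧
    ∀ (D' : Set (Q × Q)) (f' : Q × Q → G.carrier), IsPathMorph G D' f' →
      hset G D f = hset G D' f' →
      D = D' ∧ ∀ pq ∈ D, f pq = f' pq := by
  obtain ⟨⟨mseq, hminc, hD⟩, hfunc, hid, hdeg⟩ := hx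
  subst hD
  have hmono : ∀ i n, i ≤ n → pgle P (mseq i) (mseq n) := by
    intro i n h
    rcases h.lt_or_eq with h | h
    · exact hminc.2 i n h
    · exact h ▸ pgle_refl' P _
  constructor
  · refine ⟨⟨f (1, 1), 1, ⟨P.one_mem, P.one_mem, pgle_refl' P 1,
      0, pgle_one (hminc.1 0)⟩, rfl⟩, ?_, ?_⟩
    · -- hereditary
      rintro lam μ ⟨p, hpD, rfl⟩ ⟨ν, hsr, hcomp⟩
      obtain ⟨-, hp, -, n, hpn⟩ := hpD
      have hdp := hdeg 1 p ⟨P.one_mem, hp, pgle_one hp, n, hpn⟩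
      simp only [inv_one, one_mul] at hdp
      have hdlam : G.d lam * G.d ν = p := by
        rw [← hdp, ← hcomp, G.d_comp lam ν hsr]
      have ha : G.d lam ∈ P := G.d_mem lam
      have hν : G.d ν ∈ P := G.d_mem ν
      have hap : pgle P (G.d lam) p := ⟨G.d ν, hν, hdlam⟩
      have h1a : ((1:Q), G.d lam) ∈ Omega P mseq :=
        ⟨P.one_mem, ha, pgle_one ha, n, pgle_trans' hap hpn⟩
      have hax : (G.d lam, p) ∈ Omega P mseq := ⟨ha, hp, hap, n, hpn⟩
      have h1p : ((1:Q), p) ∈ Omega P mseq := ⟨P.one_mem, hp, pgle_one hp, n, hpn⟩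
      obtain ⟨hsr2, hcomp2⟩ := hfunc 1 (G.d lam) p h1a hax
      obtain ⟨w, -, huniq⟩ := G.ufp (f (1, p)) (G.d lam) (G.d ν) ha hν
        (by rw [hdp, ← hdlam])
      have hda : G.d (f (1, G.d lam)) = G.d lam := by
        have := hdeg 1 (G.d lam) h1a; simpa using this
      have hdax : G.d (f (G.d lam, p)) = G.d ν := by
        have := hdeg (G.d lam) p hax
        rw [this, ← hdlam, inv_mul_cancel_left]
      have e1 := huniq (lam, ν) ⟨hsr, hcomp, rfl, rfl⟩
      have e2 := huniq (f (1, G.d lam), f (G.d lam, p)) ⟨hsr2, hcomp2, hda, hdax⟩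
      exact ⟨G.d lam, h1a, (congrArg Prod.fst (e2.trans e1.symm))⟩
    · -- directed
      rintro μ ν ⟨p, hpD, rfl⟩ ⟨q, hqD, rfl⟩
      obtain ⟨-, hp, -, j, hpj⟩ := hpD
      obtain ⟨-, hq, -, k, hqk⟩ := hqD
      set N := max j k with hN
      have hpN : pgle P p (mseq N) := pgle_trans' hpj (hmono j N (le_max_left j k))
      have hqN : pgle P q (mseq N) := pgle_trans' hqk (hmono k N (le_max_right j k))
      have h1N : ((1:Q), mseq N) ∈ Omega P mseq :=
        ⟨P.one_mem, hminc.1 N, pgle_one (hminc.1 N), N, pgle_refl' P _⟩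
      have hpNm : (p, mseq N) ∈ Omega P mseq := ⟨hp, hminc.1 N, hpN, N, pgle_refl' P _⟩
      have hqNm : (q, mseq N) ∈ Omega P mseq := ⟨hq, hminc.1 N, hqN, N, pgle_refl' P _⟩
      have h1p : ((1:Q), p) ∈ Omega P mseq := ⟨P.one_mem, hp, pgle_one hp, j, hpj⟩
      have h1q : ((1:Q), q) ∈ Omega P mseq := ⟨P.one_mem, hq, pgle_one hq, k, hqk⟩
      obtain ⟨hs1, hc1⟩ := hfunc 1 p (mseq N) h1p hpNm
      obtain ⟨hs2, hc2⟩ := hfunc 1 q (mseq N) h1q hqNm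
      exact ⟨f (1, mseq N), ⟨mseq N, h1N, rfl⟩,
        ⟨f (p, mseq N), hs1, hc1⟩, ⟨f (q, mseq N), hs2, hc2⟩⟩
  · intro D' f' hy hh
    have hx' : IsPathMorph G (Omega P mseq) f :=
      ⟨⟨mseq, hminc, rfl⟩, hfunc, hid, hdeg⟩
    have k1 := hsub G hx' hy hh.subset
    have k2 := hsub G hy hx' hh.symm.subset
    obtain ⟨⟨mseq', hminc', hD'⟩, hfunc', hid', hdeg'⟩ := hy
    subst hD'
    have hDD : Omega P mseq = Omega P mseq' := by
      ext ⟨a, b⟩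
      constructor
      · rintro ⟨ha, hb, hab, n, hbn⟩
        have h1b := (k1 b ⟨P.one_mem, hb, pgle_one hb, n, hbn⟩).1
        exact ⟨ha, hb, hab, h1b.2.2.2⟩
      · rintro ⟨ha, hb, hab, n, hbn⟩
        have h1b := (k2 b ⟨P.one_mem, hb, pgle_one hb, n, hbn⟩).1
        exact ⟨ha, hb, hab, h1b.2.2.2⟩
    refine ⟨hDD, ?_⟩
    rintro ⟨a, b⟩ habD
    obtain ⟨ha, hb, hab, n, hbn⟩ := habD
    have h1a : ((1:Q), a) ∈ Omega P mseq :=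
      ⟨P.one_mem, ha, pgle_one ha, n, pgle_trans' hab hbn⟩
    have h1b : ((1:Q), b) ∈ Omega P mseq := ⟨P.one_mem, hb, pgle_one hb, n, hbn⟩
    obtain ⟨h1a', ea⟩ := k1 a h1a
    obtain ⟨h1b', eb⟩ := k1 b h1b
    have habD' : (a, b) ∈ Omega P mseq' := hDD ▸ (⟨ha, hb, hab, n, hbn⟩ :
      (a, b) ∈ Omega P mseq)
    obtain ⟨c, hc, hac⟩ := id hab
    have hac' : a * c = b := hac
    have hcinv : a⁻¹ * b = c := by rw [← hac', inv_mul_cancel_left]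
    have hinvP : a⁻¹ * b ∈ P := hcinv ▸ hc
    obtain ⟨hs1, hc1⟩ := hfunc 1 a b h1a ⟨ha, hb, hab, n, hbn⟩
    obtain ⟨hs2, hc2⟩ := hfunc' 1 a b h1a' habD'
    have hdb : G.d (f (1, b)) = a * (a⁻¹ * b) := by
      have := hdeg 1 b h1b
      rw [this, mul_inv_cancel_left, inv_one, one_mul]
    obtain ⟨w, -, huniq⟩ := G.ufp (f (1, b)) a (a⁻¹ * b) ha hinvP hdb
    have hda : G.d (f (1, a)) = a := by
      have := hdeg 1 a h1a; simpa using this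
    have hdab : G.d (f (a, b)) = a⁻¹ * b := hdeg a b ⟨ha, hb, hab, n, hbn⟩
    have hda' : G.d (f' (1, a)) = a := by
      have := hdeg' 1 a h1a'; simpa using this
    have hdab' : G.d (f' (a, b)) = a⁻¹ * b := hdeg' a b habD'
    have e1 := huniq (f (1, a), f (a, b)) ⟨hs1, hc1, hda, hdab⟩
    have e2 := huniq (f' (1, a), f' (a, b)) ⟨hs2, by rw [hc2, ← eb], hda', hdab'⟩
    exact congrArg Prod.snd (e1.trans e2.symm)
end

section
/- Let Λ be a finitely aligned P-graph and h the bijection from graph morphisms to filters given by h(x) = {x(e,p) : (e,p) ∈ dom(x)}. For every m ∈ P and graph morphism x with (e,m) ∈ dom(x), we have h(x·m) = {ν ∈ Λ : μν ∈ h(x)}, where μ is the unique element of h(x) of degree m; that is, h intertwines the shift on graph morphisms with the shift on filters. -/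
/-- `h` intertwines the shift on graph morphisms with the shift
on filters: for `(e,m) ∈ dom x`, `μ := x(e,m)` is the unique element of `h(x)`
of degree `m`, and `h(x·m) = {ν : μν ∈ h(x)}`. -/
theorem stmt19 {Q : Type*} [Group Q] {P : Submonoid Q} (hW : IsWQLO P)
    (G : PGraph Q P) (hfa : G.FinitelyAligned)
    (D : Set (Q × Q)) (f : Q × Q → G.carrier) (hx : IsPathMorph G D f)
    (m : Q) (hm : m ∈ P) (hdom : ((1 : Q), m) ∈ D) :
    f (1, m) ∈ hset G D f ∧
    G.d (f (1, m)) = m ∧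
    (∀ μ' ∈ hset G D f, G.d μ' = m → μ' = f (1, m)) ∧
    hset G (shiftD P m D) (shiftF m f) =
      {ν | G.s (f (1, m)) = G.r ν ∧ G.comp (f (1, m)) ν ∈ hset G D f} := by
  obtain ⟨⟨mseq, hinc, hD⟩, hcomp, hid, hdeg⟩ := hx
  have hmem : f (1, m) ∈ hset G D f := ⟨m, hdom, rfl⟩
  have hdm : G.d (f (1, m)) = m := by simpa using hdeg 1 m hdom
  refine ⟨hmem, hdm, ?_, ?_⟩
  · rintro μ' ⟨p, hp, rfl⟩ hdμ
    have hdp : G.d (f (1, p)) = p := by simpa using hdeg 1 p hp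
    rw [hdp] at hdμ
    rw [hdμ]
  · ext ν
    constructor
    · rintro ⟨p, ⟨h1, hpP, hmpD⟩, rfl⟩
      have hmor := hcomp 1 m (m * p) hdom (by simpa using hmpD)
      have h1p : ((1 : Q), m * p) ∈ D := by
        rw [hD] at hmpD ⊢
        obtain ⟨hm', hmp', hle, hub⟩ := hmpD
        exact ⟨one_mem _, hmp', ⟨m * p, hmp', one_mul _⟩, hub⟩
      refine ⟨?_, ?_⟩
      · simpa [shiftF, mul_one] using hmor.1
      · refine ⟨m * p, h1p, ?_⟩
        have := hmor.2
        simp only [shiftF, mul_one]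
        exact this.symm
    · rintro ⟨hs, p, hpD, hcompeq⟩
      have hpΩ := hD ▸ hpD
      obtain ⟨h1P, hpP, hle, hub⟩ := hpΩ
      have hdp : G.d (f (1, p)) = p := by simpa using hdeg 1 p hpD
      have hdν : G.d ν ∈ P := G.d_mem ν
      have hpval : p = m * G.d ν := by
        rw [hcompeq, G.d_comp _ _ hs, hdm] at hdp
        exact hdp.symm
      -- (m, p) ∈ D
      have hmpD : ((m : Q), p) ∈ D := by
        rw [hD]
        exact ⟨hm, hpP, ⟨G.d ν, hdν, hpval.symm⟩, hub⟩
      have hmor := hcomp 1 m p hdom hmpD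
      have hdmp : G.d (f (m, p)) = m⁻¹ * p := hdeg m p hmpD
      have hufp := G.ufp (f (1, p)) m (m⁻¹ * p) hm
        (by rw [hpval]; simpa using hdν)
        (by rw [hdp]; group)
      obtain ⟨z, hz, huniq⟩ := hufp
      have e1 : ((f (1, m), f (m, p)) : G.carrier × G.carrier) = z :=
        huniq _ ⟨hmor.1, hmor.2, hdm, hdmp⟩
      have e2 : ((f (1, m), ν) : G.carrier × G.carrier) = z :=
        huniq _ ⟨hs, hcompeq.symm, hdm, by rw [hpval]; group⟩
      have hfν : f (m, p) = ν := by
        have := e1.trans e2.symm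
        exact (Prod.ext_iff.mp this).2
      refine ⟨m⁻¹ * p, ⟨one_mem _, by rw [hpval]; simpa using hdν, ?_⟩, ?_⟩
      · simpa [mul_inv_cancel_left, mul_one] using hmpD
      · simp only [shiftF, mul_one, mul_inv_cancel_left]
        exact hfν
end
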